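/- arXiv:1804.10432 — 2 statements merged into one kernel-verified Lean document; each statement's English description precedes it below -/
import Mathlib

section
/- Let (M, dist) be a metric space, let a = (a_1, ..., a_K) be real weights with A⁰ := Σ_j a_j > 0, let A⁺ be the sum of the positive weights and A⁻ the sum of the absolute values of the negative weights. Suppose all points u_1, ..., u_K lie in the closed ball B(x, r). Then every minimizer v* of the function v ↦ Σ_j a_j · dist(v, u_j)² lies in the closed ball B(x, R) with R = 2(A⁺ + A⁻)/A⁰ · r. -/
/-!
Compare the minimizer `v` with the centre `x`. In any metric space the triangle inequality gives
`|d(v,u)² - d(x,u)² - d(v,x)²| ≤ 2 d(v,x) d(x,u)`, a defect-of-the-law-of-cosines bound. Summing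
with the weights, minimality of `v` against `x` yields
`A⁰ d(v,x)² - 2 (A⁺ + A⁻) r d(v,x) ≤ 0`, and dividing by `A⁰ d(v,x)` gives the radius.
-/

open Finset

theorem Finset.sum_abs_eq_sum_filter_pos_add_sum_filter_neg {ι : Type*} (s : Finset ι)
    (f : ι → ℝ) :
    ∑ i ∈ s, |f i| = ∑ i ∈ s with 0 < f i, f i + ∑ i ∈ s with f i < 0, |f i| := by
  rw [← sum_filter_add_sum_filter_not s (fun i => 0 < f i)]
  congr 1
  · exact sum_congr rfl fun i hi => abs_of_pos (mem_filter.mp hi).2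
  · refine (sum_subset (fun i hi => ?_) fun i hi hni => ?_).symm
    · simp only [mem_filter, not_lt] at hi ⊢
      exact ⟨hi.1, hi.2.le⟩
    · simp only [mem_filter, not_lt, not_and] at hi hni
      simp [le_antisymm hi.2 (hni hi.1)]

theorem abs_dist_sq_sub_dist_sq_sub_dist_sq_le {M : Type*} [PseudoMetricSpace M] (v x u : M) :
    |dist v u ^ 2 - dist x u ^ 2 - dist v x ^ 2| ≤ 2 * dist v x * dist x u := by
  have hupper : dist v u ≤ dist v x + dist x u := dist_triangle v x u
  have hlower : |dist v x - dist x u| ≤ dist v u := by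
    simpa [dist_comm x u] using abs_dist_sub_le v u x
  have hsq : (dist v x - dist x u) ^ 2 ≤ dist v u ^ 2 := sq_le_sq' (abs_le.mp hlower).1
    (abs_le.mp hlower).2
  rw [abs_le]
  constructor <;> nlinarith [dist_nonneg (x := v) (y := u), dist_nonneg (x := v) (y := x),
    dist_nonneg (x := x) (y := u)]

theorem sum_mul_dist_sq_sub_sum_mul_dist_sq_ge {M : Type*} [PseudoMetricSpace M] {ι : Type*}
    [Fintype ι] (a : ι → ℝ) (u : ι → M) (v x : M) {r : ℝ} (hball : ∀ j, dist (u j) x ≤ r) :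
    (∑ j, a j) * dist v x ^ 2 - 2 * (∑ j, |a j|) * r * dist v x ≤
      ∑ j, a j * dist v (u j) ^ 2 - ∑ j, a j * dist x (u j) ^ 2 := by
  have hterm (j : ι) : a j * dist v x ^ 2 - 2 * |a j| * r * dist v x ≤
      a j * dist v (u j) ^ 2 - a j * dist x (u j) ^ 2 := by
    have hdefect := abs_le.mp <| (abs_dist_sq_sub_dist_sq_sub_dist_sq_le v x (u j)).trans <|
      mul_le_mul_of_nonneg_left ((dist_comm x (u j)).trans_le (hball j)) (by positivity)
    rcases le_or_gt 0 (a j) with ha | ha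
    · rw [abs_of_nonneg ha]
      nlinarith [mul_le_mul_of_nonneg_left hdefect.1 ha]
    · rw [abs_of_neg ha]
      nlinarith [mul_le_mul_of_nonpos_left hdefect.2 ha.le]
  calc (∑ j, a j) * dist v x ^ 2 - 2 * (∑ j, |a j|) * r * dist v x
      = ∑ j, (a j * dist v x ^ 2 - 2 * |a j| * r * dist v x) := by
        rw [sum_sub_distrib, sum_mul, mul_sum, sum_mul, sum_mul]
    _ ≤ ∑ j, (a j * dist v (u j) ^ 2 - a j * dist x (u j) ^ 2) := sum_le_sum fun j _ => hterm j
    _ = _ := sum_sub_distrib _ _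

/-- every minimizer of the weighted sum of squared distances for points
in `B(x,r)` lies in `B(x, 2(A⁺+A⁻)/A⁰ · r)`. -/
theorem minimizer_in_ball {M : Type*} [MetricSpace M] {K : ℕ}
    (a : Fin K → ℝ) (u : Fin K → M) (x : M) (r : ℝ) (hr : 0 ≤ r)
    (hball : ∀ j, dist (u j) x ≤ r)
    (hA0 : 0 < ∑ j, a j)
    (vstar : M)
    (hmin : ∀ v : M, ∑ j, a j * dist vstar (u j) ^ 2 ≤ ∑ j, a j * dist v (u j) ^ 2) :
    dist vstar x ≤
      2 * ((∑ j ∈ univ.filter fun j => 0 < a j, a j)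
            + ∑ j ∈ univ.filter fun j => a j < 0, |a j|) / (∑ j, a j) * r := by
  have hquad : (∑ j, a j) * dist vstar x ^ 2 ≤ 2 * (∑ j, |a j|) * r * dist vstar x := by
    have hbound := sum_mul_dist_sq_sub_sum_mul_dist_sq_ge a u vstar x hball
    linarith [hmin x]
  rw [← sum_abs_eq_sum_filter_pos_add_sum_filter_neg, div_mul_eq_mul_div, le_div_iff₀ hA0]
  by_contra! hfar
  have hD : 0 < dist vstar x :=
    pos_of_mul_pos_left ((by positivity : (0 : ℝ) ≤ 2 * (∑ j, |a j|) * r).trans_lt hfar) hA0.le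
  nlinarith
end

section
/- Let (M, dist) be a proper metric space, f ∈ M^N, and A ∈ ℝ^{N×K} a matrix whose rows each have positive sum. For u ∈ M^K define 𝒜(u)_i to be a minimizer of v ↦ Σ_j A_{ij} dist(v, u_j)² that is closest to f_i among all such minimizers, and set D(u) = Σ_{i=1}^N dist(𝒜(u)_i, f_i)^p for p ∈ [1, ∞). Then D is lower semicontinuous on M^K: if u^(n) → u in M^K, then D(u) ≤ liminf_n D(u^(n)). -/
open Filter Topology

section Aux

variable {M : Type*} [MetricSpace M] [ProperSpace M] {K : ℕ}

private lemma continuous_obj (A : Fin K → ℝ) (u : Fin K → M) :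
    Continuous (fun v : M => ∑ j, A j * dist v (u j) ^ 2) :=
  continuous_finset_sum _ fun j _ =>
    continuous_const.mul ((continuous_id.dist continuous_const).pow 2)

private lemma isClosed_argmin (A : Fin K → ℝ) (u : Fin K → M) :
    IsClosed {v : M | ∀ w : M, ∑ j, A j * dist v (u j) ^ 2 ≤ ∑ j, A j * dist w (u j) ^ 2} := by
  have h : {v : M | ∀ w : M, ∑ j, A j * dist v (u j) ^ 2 ≤ ∑ j, A j * dist w (u j) ^ 2}
      = ⋂ w : M, {v : M | ∑ j, A j * dist v (u j) ^ 2 ≤ ∑ j, A j * dist w (u j) ^ 2} := by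
    ext v; simp [Set.mem_iInter]
  rw [h]
  exact isClosed_iInter fun w => isClosed_le (continuous_obj A u) continuous_const

private lemma exists_min (A : Fin K → ℝ) (hs : 0 < ∑ j, A j) (u : Fin K → M)
    (j0 : Fin K) (R0 P : ℝ) (hR0 : ∀ j, dist (u j0) (u j) ≤ R0)
    (hP : ∑ j, A j * dist (u j0) (u j) ^ 2 ≤ P) :
    ∃ v : M, (∀ w : M, ∑ j, A j * dist v (u j) ^ 2 ≤ ∑ j, A j * dist w (u j) ^ 2) ∧
      dist v (u j0) ≤
        max 1 (max ((2 * (∑ j, |A j|) * R0 + 1) / (∑ j, A j))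
          ((∑ j, |A j|) * R0 ^ 2 + P + 1)) := by
  set x0 := u j0 with hx0
  set B := ∑ j, |A j| with hB
  set s := ∑ j, A j with hsdef
  set R := max 1 (max ((2 * B * R0 + 1) / s) (B * R0 ^ 2 + P + 1)) with hR
  have hR0nn : 0 ≤ R0 := by have := hR0 j0; rwa [dist_self] at this
  have hBnn : 0 ≤ B := Finset.sum_nonneg fun j _ => abs_nonneg _
  have key : ∀ w : M,
      s * dist w x0 ^ 2 - B * (2 * dist w x0 * R0 + R0 ^ 2) ≤ ∑ j, A j * dist w (u j) ^ 2 := by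
    intro w
    set d := dist w x0 with hd
    have hterm : ∀ j, A j * d ^ 2 - |A j| * (2 * d * R0 + R0 ^ 2) ≤ A j * dist w (u j) ^ 2 := by
      intro j
      have h1 : |dist w (u j) - d| ≤ R0 := by
        have h := abs_dist_sub_le (u j) x0 w
        rw [dist_comm (u j) w, dist_comm x0 w] at h
        exact h.trans (by rw [hx0, dist_comm]; exact hR0 j)
      have h1a := abs_le.mp h1
      have h2 : |dist w (u j) ^ 2 - d ^ 2| ≤ (2 * d + R0) * R0 := by
        have he : dist w (u j) ^ 2 - d ^ 2 = (dist w (u j) - d) * (dist w (u j) + d) := by ring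
        rw [he, abs_mul]
        have hd0 : 0 ≤ d := dist_nonneg
        have hsum : |dist w (u j) + d| ≤ 2 * d + R0 := by
          rw [abs_of_nonneg (by positivity)]; linarith [h1a.2]
        calc |dist w (u j) - d| * |dist w (u j) + d| ≤ R0 * (2 * d + R0) :=
              mul_le_mul h1 hsum (abs_nonneg _) hR0nn
          _ = (2 * d + R0) * R0 := by ring
      have h4 : A j * (d ^ 2 - dist w (u j) ^ 2) ≤ |A j| * (2 * d * R0 + R0 ^ 2) := by
        calc A j * (d ^ 2 - dist w (u j) ^ 2) ≤ |A j * (d ^ 2 - dist w (u j) ^ 2)| :=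
              le_abs_self _
          _ = |A j| * |d ^ 2 - dist w (u j) ^ 2| := abs_mul _ _
          _ ≤ |A j| * ((2 * d + R0) * R0) := by
              refine mul_le_mul_of_nonneg_left ?_ (abs_nonneg _)
              rw [abs_sub_comm]; exact h2
          _ = |A j| * (2 * d * R0 + R0 ^ 2) := by ring
      linarith
    calc s * d ^ 2 - B * (2 * d * R0 + R0 ^ 2)
        = ∑ j, (A j * d ^ 2 - |A j| * (2 * d * R0 + R0 ^ 2)) := by
          rw [Finset.sum_sub_distrib, ← Finset.sum_mul, ← Finset.sum_mul]
      _ ≤ ∑ j, A j * dist w (u j) ^ 2 := Finset.sum_le_sum fun j _ => hterm j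
  have hR1 : (1 : ℝ) ≤ R := le_max_left _ _
  have hRnn : (0 : ℝ) ≤ R := zero_le_one.trans hR1
  have hx0mem : x0 ∈ Metric.closedBall x0 R := by simp [hRnn]
  obtain ⟨v, hvmem, hvmin⟩ := (isCompact_closedBall x0 R).exists_isMinOn ⟨x0, hx0mem⟩
    ((continuous_obj A u).continuousOn)
  refine ⟨v, ?_, by simpa [Metric.mem_closedBall] using hvmem⟩
  intro w
  by_cases hw : w ∈ Metric.closedBall x0 R
  · exact hvmin hw
  · have hdlt : R < dist w x0 := by
      simpa [Metric.mem_closedBall, not_le] using hw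
    have hφx0 : ∑ j, A j * dist v (u j) ^ 2 ≤ P := by
      refine le_trans (hvmin hx0mem) ?_
      simpa [hx0] using hP
    have h2 : (2 * B * R0 + 1) / s ≤ R := le_trans (le_max_left _ _) (le_max_right _ _)
    have h3 : B * R0 ^ 2 + P + 1 ≤ R := le_trans (le_max_right _ _) (le_max_right _ _)
    have hd1 : 1 ≤ dist w x0 := hR1.trans hdlt.le
    have hsd : 2 * B * R0 + 1 ≤ s * dist w x0 := by
      have hh : (2 * B * R0 + 1) / s ≤ dist w x0 := h2.trans hdlt.le
      calc 2 * B * R0 + 1 = ((2 * B * R0 + 1) / s) * s := by field_simp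
        _ ≤ dist w x0 * s := mul_le_mul_of_nonneg_right hh hs.le
        _ = s * dist w x0 := mul_comm _ _
    have h4 : B * R0 ^ 2 + P + 1 ≤ dist w x0 := h3.trans hdlt.le
    have hkey := key w
    nlinarith [hkey, hφx0, hsd, hd1, h4, mul_nonneg hBnn hR0nn, dist_nonneg (x := w) (y := x0)]

private lemma attain (S : Set M) (hcl : IsClosed S) (hne : S.Nonempty) (x : M) :
    ∃ m ∈ S, (∀ w ∈ S, dist m x ≤ dist w x) ∧ sInf ((fun v => dist v x) '' S) = dist m x := by
  obtain ⟨v0, hv0⟩ := hne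
  have hT : IsCompact (S ∩ Metric.closedBall x (dist v0 x)) :=
    (isCompact_closedBall _ _).inter_left hcl
  obtain ⟨m, hm, hmin⟩ := hT.exists_isMinOn
    ⟨v0, hv0, by simp [Metric.mem_closedBall]⟩
    ((continuous_id.dist continuous_const).continuousOn)
  have hmS : m ∈ S := hm.1
  have hglob : ∀ w ∈ S, dist m x ≤ dist w x := by
    intro w hw
    by_cases hball : dist w x ≤ dist v0 x
    · exact hmin ⟨hw, by simpa [Metric.mem_closedBall] using hball⟩
    · exact le_trans (hmin ⟨hv0, by simp [Metric.mem_closedBall]⟩) (le_of_not_ge hball)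
  refine ⟨m, hmS, hglob, le_antisymm (csInf_le ⟨0, ?_⟩ ⟨m, hmS, rfl⟩)
    (le_csInf ⟨dist m x, m, hmS, rfl⟩ ?_)⟩
  · rintro y ⟨w, -, rfl⟩; exact dist_nonneg
  · rintro y ⟨w, hw, rfl⟩; exact hglob w hw

end Aux

/-- lower semicontinuity of the indirect-measurement data term
`D(u) = Σ_i dist(𝒜(u)_i, f_i)^p`, where `dist(𝒜(u)_i, f_i)` is the infimum of
`dist(v, f_i)` over all minimizers `v` of `v ↦ Σ_j A_{ij} dist(v, u_j)²`. -/
theorem data_term_lsc {M : Type*} [MetricSpace M] [ProperSpace M] {N K : ℕ}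
    (f : Fin N → M) (A : Fin N → Fin K → ℝ) (hA : ∀ i, 0 < ∑ j, A i j)
    (p : ℝ) (hp : 1 ≤ p)
    (D : (Fin K → M) → ℝ)
    (hD : ∀ u : Fin K → M, D u = ∑ i,
      (sInf ((fun v => dist v (f i)) ''
        {v : M | ∀ w : M,
          ∑ j, A i j * dist v (u j) ^ 2 ≤ ∑ j, A i j * dist w (u j) ^ 2})) ^ p)
    (u : ℕ → Fin K → M) (ulim : Fin K → M)
    (hconv : Tendsto u atTop (𝓝 ulim)) :
    D ulim ≤ liminf (fun n => D (u n)) atTop := by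
  classical
  have hp0 : (0 : ℝ) < p := lt_of_lt_of_le one_pos hp
  have hD0 : ∀ w : Fin K → M, 0 ≤ D w := by
    intro w; rw [hD]
    exact Finset.sum_nonneg fun i _ => Real.rpow_nonneg
      (Real.sInf_nonneg (by rintro y ⟨z, -, rfl⟩; exact dist_nonneg)) p
  rcases Nat.eq_zero_or_pos N with hN | hN
  · have hzero : ∀ w : Fin K → M, D w = 0 := by
      intro w; rw [hD]; subst hN; simp
    simp only [hzero]
    exact (Filter.liminf_const (0 : ℝ)).ge
  rcases Nat.eq_zero_or_pos K with hK0 | hK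
  · exfalso; have := hA ⟨0, hN⟩; subst hK0; simpa using this
  set j0 : Fin K := ⟨0, hK⟩ with hj0
  -- nonemptiness of the argmin sets
  have hSne : ∀ (i : Fin N) (w : Fin K → M),
      ({v : M | ∀ z : M,
        ∑ j, A i j * dist v (w j) ^ 2 ≤ ∑ j, A i j * dist z (w j) ^ 2}).Nonempty := by
    intro i w
    obtain ⟨v, hv, -⟩ := exists_min (A i) (hA i) w j0 (∑ j, dist (w j0) (w j))
      (∑ j, A i j * dist (w j0) (w j) ^ 2)
      (fun j => Finset.single_le_sum (fun j' _ => dist_nonneg) (Finset.mem_univ j)) le_rfl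
    exact ⟨v, hv⟩
  -- attained closest minimizers
  have hch : ∀ (i : Fin N) (w : Fin K → M), ∃ m ∈ {v : M | ∀ z : M,
      ∑ j, A i j * dist v (w j) ^ 2 ≤ ∑ j, A i j * dist z (w j) ^ 2},
      (∀ z ∈ {v : M | ∀ z : M,
        ∑ j, A i j * dist v (w j) ^ 2 ≤ ∑ j, A i j * dist z (w j) ^ 2},
        dist m (f i) ≤ dist z (f i)) ∧
      sInf ((fun v => dist v (f i)) '' {v : M | ∀ z : M,
        ∑ j, A i j * dist v (w j) ^ 2 ≤ ∑ j, A i j * dist z (w j) ^ 2}) = dist m (f i) :=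
    fun i w => attain _ (isClosed_argmin (A i) w) (hSne i w) (f i)
  choose m hmS hmin hmdist using hch
  have hD' : ∀ w : Fin K → M, D w = ∑ i, dist (m i w) (f i) ^ p := by
    intro w; rw [hD]
    exact Finset.sum_congr rfl fun i _ => by rw [hmdist i w]
  -- eventual upper bound for D (u n)
  have hev : ∀ᶠ n in atTop, ∀ j, dist (u n j) (ulim j) ≤ 1 := by
    obtain ⟨N₁, hN₁⟩ := Metric.tendsto_atTop.mp hconv 1 one_pos
    filter_upwards [Filter.eventually_ge_atTop N₁] with n hn j
    exact le_of_lt (lt_of_le_of_lt (dist_le_pi_dist (u n) ulim j) (hN₁ n hn))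
  set R0 : ℝ := 2 + ∑ j, dist (ulim j0) (ulim j) with hR0def
  have hR0ev : ∀ᶠ n in atTop, ∀ j, dist (u n j0) (u n j) ≤ R0 := by
    filter_upwards [hev] with n hn j
    have h1 : dist (u n j0) (u n j) ≤
        dist (u n j0) (ulim j0) + dist (ulim j0) (ulim j) + dist (ulim j) (u n j) :=
      dist_triangle4 _ _ _ _
    have h2 : dist (ulim j0) (ulim j) ≤ ∑ j', dist (ulim j0) (ulim j') :=
      Finset.single_le_sum (fun j' _ => dist_nonneg) (Finset.mem_univ j)
    have h3 := hn j0
    have h4 : dist (ulim j) (u n j) ≤ 1 := by rw [dist_comm]; exact hn j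
    rw [hR0def]; linarith
  set P : Fin N → ℝ := fun i => ∑ j, |A i j| * R0 ^ 2 with hPdef
  set Cb : Fin N → ℝ := fun i => dist (ulim j0) (f i) + 1 +
    max 1 (max ((2 * (∑ j, |A i j|) * R0 + 1) / (∑ j, A i j))
      ((∑ j, |A i j|) * R0 ^ 2 + P i + 1)) with hCbdef
  have hgub : ∀ i : Fin N, ∀ᶠ n in atTop, dist (m i (u n)) (f i) ≤ Cb i := by
    intro i
    filter_upwards [hR0ev, hev] with n hn hn1
    obtain ⟨v, hv, hvball⟩ := exists_min (A i) (hA i) (u n) j0 R0 (P i) hn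
      (Finset.sum_le_sum fun j _ => by
        calc A i j * dist (u n j0) (u n j) ^ 2
            ≤ |A i j| * dist (u n j0) (u n j) ^ 2 :=
              mul_le_mul_of_nonneg_right (le_abs_self _) (by positivity)
          _ ≤ |A i j| * R0 ^ 2 := mul_le_mul_of_nonneg_left
              (pow_le_pow_left₀ dist_nonneg (hn j) 2) (abs_nonneg _))
    have hle : dist (m i (u n)) (f i) ≤ dist v (f i) := hmin i (u n) v hv
    have htri : dist v (f i) ≤ dist v (u n j0) + dist (u n j0) (ulim j0) + dist (ulim j0) (f i) :=
      dist_triangle4 _ _ _ _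
    have h5 := hn1 j0
    rw [hCbdef]
    simp only []
    linarith
  have hDub : ∀ᶠ n in atTop, D (u n) ≤ ∑ i, Cb i ^ p := by
    have hall : ∀ᶠ n in atTop, ∀ i, dist (m i (u n)) (f i) ≤ Cb i :=
      Filter.eventually_all.mpr hgub
    filter_upwards [hall] with n hn
    rw [hD']
    exact Finset.sum_le_sum fun i _ => Real.rpow_le_rpow dist_nonneg (hn i) hp0.le
  -- key lower-semicontinuity claim
  have key : ∀ c : ℝ, c < D ulim → ∀ᶠ n in atTop, c ≤ D (u n) := by
    intro c hc
    rcases le_or_gt c 0 with hc0 | hc0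
    · exact Eventually.of_forall fun n => hc0.trans (hD0 _)
    by_contra hcon
    rw [Filter.not_eventually] at hcon
    push_neg at hcon
    obtain ⟨φ, hφmono, hφ⟩ := Filter.extraction_of_frequently_atTop hcon
    set r := c ^ p⁻¹ with hrdef
    have hball : ∀ (k : ℕ) (i : Fin N), m i (u (φ k)) ∈ Metric.closedBall (f i) r := by
      intro k i
      have h1 : dist (m i (u (φ k))) (f i) ^ p ≤ D (u (φ k)) := by
        rw [hD']
        exact Finset.single_le_sum (f := fun i' => dist (m i' (u (φ k))) (f i') ^ p)
          (fun i' _ => Real.rpow_nonneg dist_nonneg p) (Finset.mem_univ i)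
      have h2 : dist (m i (u (φ k))) (f i) ^ p ≤ c := h1.trans (hφ k).le
      rw [Metric.mem_closedBall, hrdef]
      calc dist (m i (u (φ k))) (f i)
          = (dist (m i (u (φ k))) (f i) ^ p) ^ p⁻¹ :=
            (Real.rpow_rpow_inv dist_nonneg hp0.ne').symm
        _ ≤ c ^ p⁻¹ := Real.rpow_le_rpow (Real.rpow_nonneg dist_nonneg p) h2
            (inv_nonneg.mpr hp0.le)
    have hcpt : IsCompact (Set.univ.pi fun i : Fin N => Metric.closedBall (f i) r) :=
      isCompact_univ_pi fun i => isCompact_closedBall _ _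
    obtain ⟨v, hvmem, ψ, hψmono, hψtend⟩ := hcpt.tendsto_subseq
      (x := fun k => fun i => m i (u (φ k)))
      (fun k => Set.mem_univ_pi.mpr fun i => hball k i)
    have hcoord : ∀ i, Tendsto (fun k0 => m i (u (φ (ψ k0)))) atTop (𝓝 (v i)) := by
      intro i
      exact (tendsto_pi_nhds.mp hψtend) i
    have hucomp : Tendsto (fun k0 => u (φ (ψ k0))) atTop (𝓝 ulim) :=
      hconv.comp ((hφmono.comp hψmono).tendsto_atTop)
    have hujcomp : ∀ j, Tendsto (fun k0 => u (φ (ψ k0)) j) atTop (𝓝 (ulim j)) :=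
      fun j => (tendsto_pi_nhds.mp hucomp) j
    have hvS : ∀ i, v i ∈ {v' : M | ∀ z : M,
        ∑ j, A i j * dist v' (ulim j) ^ 2 ≤ ∑ j, A i j * dist z (ulim j) ^ 2} := by
      intro i z
      have hL : Tendsto
          (fun k0 => ∑ j, A i j * dist (m i (u (φ (ψ k0)))) (u (φ (ψ k0)) j) ^ 2)
          atTop (𝓝 (∑ j, A i j * dist (v i) (ulim j) ^ 2)) :=
        tendsto_finset_sum _ fun j _ =>
          tendsto_const_nhds.mul (((hcoord i).dist (hujcomp j)).pow 2)
      have hRt : Tendsto (fun k0 => ∑ j, A i j * dist z (u (φ (ψ k0)) j) ^ 2)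
          atTop (𝓝 (∑ j, A i j * dist z (ulim j) ^ 2)) :=
        tendsto_finset_sum _ fun j _ =>
          tendsto_const_nhds.mul ((tendsto_const_nhds.dist (hujcomp j)).pow 2)
      exact le_of_tendsto_of_tendsto hL hRt
        (Eventually.of_forall fun k0 => hmS i (u (φ (ψ k0))) z)
    have hsum : Tendsto (fun k0 => ∑ i, dist (m i (u (φ (ψ k0)))) (f i) ^ p)
        atTop (𝓝 (∑ i, dist (v i) (f i) ^ p)) :=
      tendsto_finset_sum _ fun i _ =>
        ((hcoord i).dist tendsto_const_nhds).rpow_const (Or.inr hp0.le)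
    have hle : ∑ i, dist (v i) (f i) ^ p ≤ c :=
      le_of_tendsto hsum (Eventually.of_forall fun k0 => by
        rw [← hD' (u (φ (ψ k0)))]; exact (hφ (ψ k0)).le)
    have hfin : D ulim ≤ ∑ i, dist (v i) (f i) ^ p := by
      rw [hD]
      refine Finset.sum_le_sum fun i _ => Real.rpow_le_rpow
        (Real.sInf_nonneg ?_) ?_ hp0.le
      · rintro y ⟨z, -, rfl⟩; exact dist_nonneg
      · exact csInf_le ⟨0, by rintro y ⟨z, -, rfl⟩; exact dist_nonneg⟩
          ⟨v i, hvS i, rfl⟩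
    linarith
  -- conclude
  by_contra hfinal
  push_neg at hfinal
  obtain ⟨c, hc1, hc2⟩ := exists_between hfinal
  have hco : IsCoboundedUnder (· ≥ ·) atTop (fun n => D (u n)) :=
    Filter.isCoboundedUnder_ge_of_eventually_le atTop hDub
  have := Filter.le_liminf_of_le hco (key c hc2)
  exact absurd this (not_le.mpr hc1)
end
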